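/- arXiv:1509.03358 — 5 statements merged into one kernel-verified Lean document; each statement's English description precedes it below -/
import Mathlib

section
/- For every integer n ≥ 1 and every complex number r with |r| < 1, one has (1/n) · ∑_{m=1}^{n} r·e^{2πim/n}/(1 − r·e^{2πim/n}) = r^n/(1 − r^n). (Note that the denominators are nonzero since |r·e^{2πim/n}| = |r| < 1.) -/
/-!
With `ζ` a primitive `n`-th root of unity, every `x = r ζ^m` satisfies `xⁿ = rⁿ`, so
`x / (1 - x) = (x + x² + ⋯ + xⁿ) / (1 - rⁿ)`. Summing over `m`, the power sums
`∑ₘ (r ζ^m)^j` vanish for `0 < j < n` and equal `n rⁿ` for `j = n`.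
-/

open Finset

theorem Finset.sum_Icc_one_eq_sum_range {M : Type*} [AddCommMonoid M] {f : ℕ → M} {n : ℕ}
    (hf : f n = f 0) : ∑ m ∈ Icc 1 n, f m = ∑ m ∈ range n, f m := by
  cases n with
  | zero => simp
  | succ k =>
    rw [show Icc 1 (k + 1) = Ioc 0 (k + 1) from rfl, sum_Ioc_succ_top k.zero_le, hf,
      sum_Ioc_add_eq_sum_Icc k.zero_le, ← Nat.range_succ_eq_Icc_zero]

theorem div_one_sub_eq_geom_sum_div {K : Type*} [Field K] {x c : K} {n : ℕ}
    (hx : x ^ n = c) (hc : c ≠ 1) :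
    x / (1 - x) = (∑ k ∈ range n, x ^ (k + 1)) / (1 - c) := by
  have hx1 : x ≠ 1 := by rintro rfl; exact hc (hx ▸ one_pow n)
  rw [div_eq_div_iff (sub_ne_zero.2 hx1.symm) (sub_ne_zero.2 hc.symm)]
  simp_rw [pow_succ, ← sum_mul]
  linear_combination x * geom_sum_mul x n + x * hx

theorem sum_range_pow_eq_zero_of_pow_eq_one {R : Type*} [CommRing R] [IsDomain R] {w : R} {n : ℕ}
    (hw : w ^ n = 1) (hw1 : w ≠ 1) : ∑ m ∈ range n, w ^ m = 0 := by
  have := geom_sum_mul w n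
  rw [hw, sub_self] at this
  exact (mul_eq_zero.1 this).resolve_right (sub_ne_zero.2 hw1)

namespace IsPrimitiveRoot

variable {K : Type*} [Field K] {ζ : K} {n : ℕ}

theorem sum_range_mul_pow_pow_eq_zero (hζ : IsPrimitiveRoot ζ n) (r : K) {j : ℕ} (hj : j ≠ 0)
    (hjn : j < n) :
    ∑ m ∈ range n, (r * ζ ^ m) ^ j = 0 := by
  have hw : (ζ ^ j) ^ n = 1 := by rw [← pow_mul, mul_comm, pow_mul, hζ.pow_eq_one, one_pow]
  simp_rw [mul_pow, ← pow_mul, mul_comm _ j, pow_mul, ← mul_sum,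
    sum_range_pow_eq_zero_of_pow_eq_one hw (hζ.pow_ne_one_of_pos_of_lt hj hjn), mul_zero]

theorem sum_range_mul_pow_div_one_sub (hζ : IsPrimitiveRoot ζ n) {r : K} (hr : r ^ n ≠ 1) :
    ∑ m ∈ range n, r * ζ ^ m / (1 - r * ζ ^ m) = n * r ^ n / (1 - r ^ n) := by
  have hpow (m : ℕ) : (r * ζ ^ m) ^ n = r ^ n := by
    rw [mul_pow, ← pow_mul, mul_comm m n, pow_mul, hζ.pow_eq_one, one_pow, mul_one]
  obtain _ | n := n
  · exact absurd (pow_zero r) hr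
  simp_rw [div_one_sub_eq_geom_sum_div (hpow _) hr, ← sum_div]
  rw [sum_comm, sum_range_succ, sum_eq_zero fun k hk =>
    hζ.sum_range_mul_pow_pow_eq_zero r k.succ_ne_zero (by simpa using hk), zero_add]
  simp [hpow]

end IsPrimitiveRoot

theorem Complex.exp_two_pi_I_mul_natCast_div (m n : ℕ) :
    Complex.exp (2 * Real.pi * Complex.I * m / n) =
      Complex.exp (2 * Real.pi * Complex.I / n) ^ m := by
  rw [← Complex.exp_nat_mul]; ring_nf

/-- For `n ≥ 1` and `|r| < 1`,
`(1/n) ∑_{m=1}^n r·e^{2πim/n}/(1 − r·e^{2πim/n}) = rⁿ/(1 − rⁿ)`. -/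
theorem stmt2 (n : ℕ) (hn : 1 ≤ n) (r : ℂ) (hr : ‖r‖ < 1) :
    (1 / (n : ℂ)) * ∑ m ∈ Finset.Icc 1 n,
        r * Complex.exp (2 * (Real.pi : ℂ) * Complex.I * m / n) /
          (1 - r * Complex.exp (2 * (Real.pi : ℂ) * Complex.I * m / n)) =
      r ^ n / (1 - r ^ n) := by
  have hn0 : n ≠ 0 := by omega
  have hζ := Complex.isPrimitiveRoot_exp n hn0
  have hrn : r ^ n ≠ 1 := fun h => by
    simpa [← norm_pow, h] using pow_lt_one₀ (norm_nonneg r) hr hn0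
  simp_rw [Complex.exp_two_pi_I_mul_natCast_div]
  rw [sum_Icc_one_eq_sum_range (by simp [hζ.pow_eq_one]), hζ.sum_range_mul_pow_div_one_sub hrn]
  field_simp
end

section
/- Let A be a unital associative algebra over ℂ, let T ∈ A, let n ≥ 1 be an integer and let r be a real number with 0 < r < 1. Assume that for every k ∈ {1, …, n} the elements r·e^{2πik/n}·1 − T and e^{2πik/n}·1 − T are invertible in A. Define E_n = (1/n) ∑_{k=1}^{n} r·e^{2πik/n} · (r·e^{2πik/n}·1 − T)^{-1} and F_n = (1/n) ∑_{l=1}^{n} e^{2πil/n} · (e^{2πil/n}·1 − T)^{-1}. Then E_n F_n = F_n E_n = (1/(1 − r^n))·E_n − (r^n/(1 − r^n))·F_n. -/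
/-!
With `R(z) = (z - T)⁻¹` and nodes `ρωₖ`, `σωₗ` (`ωₖ = e^{2πik/n}`), the first resolvent identity
`R(a)R(b) = (b - a)⁻¹ (R(a) - R(b))` writes the product of the two Riemann sums as a combination
of the `R(ρωₖ)` and `R(σωₗ)` alone. The coefficients are Cauchy sums `∑ ωₗ / (c - ωₗ)` over the
`n`-th roots of unity, which logarithmic differentiation of `Xⁿ - 1 = ∏ (X - ωₗ)` evaluates as
`n / (cⁿ - 1)`; since `(ρωₖ)ⁿ = ρⁿ` and `(σωₗ)ⁿ = σⁿ` they do not depend on `k` or `l`.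
All resolvents of `T` commute, so the two products agree.
-/

/-- The `k`-th point `e^{2πik/n}` on the unit circle among the `n`-th roots of unity. -/
noncomputable def rootFn (n k : ℕ) : ℂ :=
  Complex.exp (2 * (Real.pi : ℂ) * Complex.I * k / n)

open Finset

theorem Finset.sum_Icc_one_eq_sum_range_of_eq {M : Type*} [AddCommMonoid M] {f : ℕ → M} {n : ℕ}
    (h : f n = f 0) : ∑ k ∈ Icc 1 n, f k = ∑ k ∈ range n, f k := by
  rw [← Ico_add_one_right_eq_Icc, sum_Ico_eq_sum_range, Nat.add_sub_cancel]
  cases n with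
  | zero => simp
  | succ m => rw [sum_range_succ, sum_range_succ' f, add_comm 1 m, h]; simp_rw [add_comm 1]

namespace IsPrimitiveRoot

open Polynomial

variable {K : Type*} [Field K] {ζ : K} {n : ℕ}

theorem sum_range_inv_sub_pow (hζ : IsPrimitiveRoot ζ n) {c : K} (hc : c ^ n ≠ 1) :
    ∑ k ∈ range n, (c - ζ ^ k)⁻¹ = n * c ^ (n - 1) / (c ^ n - 1) := by
  have hf : ((X ^ n - C 1 : K[X]).eval c) ≠ 0 := by simpa [sub_eq_zero] using hc
  have h := (X_pow_sub_one_splits hζ).eval_derivative_div_eval_of_ne_zero hf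
  rw [← nthRoots, hζ.nthRoots_eq (one_pow n)] at h
  simpa [Finset.sum, Multiset.map_map, Function.comp_def, derivative_X_pow] using h.symm

theorem sum_range_pow_div_sub_pow (hζ : IsPrimitiveRoot ζ n) {c : K} (hc : c ^ n ≠ 1) :
    ∑ k ∈ range n, ζ ^ k / (c - ζ ^ k) = n / (c ^ n - 1) := by
  have hn : n ≠ 0 := by rintro rfl; exact hc (pow_zero c)
  have hterm : ∀ k, ζ ^ k / (c - ζ ^ k) = c * (c - ζ ^ k)⁻¹ - 1 := fun k => by
    have : c - ζ ^ k ≠ 0 := fun h => hc <| by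
      rw [sub_eq_zero.mp h, ← pow_mul, mul_comm, pow_mul, hζ.pow_eq_one, one_pow]
    field_simp
    ring
  have hc1 : c ^ n - 1 ≠ 0 := sub_ne_zero.mpr hc
  rw [sum_congr rfl fun k _ => hterm k, sum_sub_distrib, ← mul_sum, hζ.sum_range_inv_sub_pow hc,
    sum_const, card_range, nsmul_one, ← mul_div_assoc, mul_left_comm, ← pow_succ',
    Nat.sub_add_cancel (Nat.one_le_iff_ne_zero.mpr hn)]
  field_simp
  ring

end IsPrimitiveRoot

section RootFn

variable {n : ℕ}

theorem rootFn_eq_pow (n k : ℕ) : rootFn n k = rootFn n 1 ^ k := by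
  rw [rootFn, rootFn, ← Complex.exp_nat_mul]
  congr 1
  push_cast
  ring

theorem isPrimitiveRoot_rootFn_one (hn : n ≠ 0) : IsPrimitiveRoot (rootFn n 1) n := by
  simpa [rootFn] using Complex.isPrimitiveRoot_exp n hn

theorem rootFn_pow_self (hn : n ≠ 0) (k : ℕ) : rootFn n k ^ n = 1 := by
  rw [rootFn_eq_pow, ← pow_mul, mul_comm, pow_mul, (isPrimitiveRoot_rootFn_one hn).pow_eq_one,
    one_pow]

theorem sum_rootFn_div_sub {c : ℂ} (hc : c ^ n ≠ 1) :
    ∑ k ∈ Icc 1 n, rootFn n k / (c - rootFn n k) = n / (c ^ n - 1) := by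
  have hn : n ≠ 0 := by rintro rfl; exact hc (pow_zero c)
  obtain ⟨ζ, hζ, hpow⟩ : ∃ ζ, IsPrimitiveRoot ζ n ∧ ∀ k, rootFn n k = ζ ^ k :=
    ⟨_, isPrimitiveRoot_rootFn_one hn, rootFn_eq_pow n⟩
  simp only [hpow]
  rw [sum_Icc_one_eq_sum_range_of_eq (by rw [hζ.pow_eq_one, pow_zero]),
    hζ.sum_range_pow_div_sub_pow hc]

theorem mul_rootFn_pow (hn : n ≠ 0) (s : ℂ) (k : ℕ) : (s * rootFn n k) ^ n = s ^ n := by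
  rw [mul_pow, rootFn_pow_self hn, mul_one]

theorem sum_mul_rootFn_mul_div_sub {s c : ℂ} (hs : s ≠ 0) (hc : c ^ n ≠ s ^ n) :
    ∑ k ∈ Icc 1 n, s * rootFn n k * c / (c - s * rootFn n k) = n * s ^ n / (c ^ n - s ^ n) * c := by
  have hn : n ≠ 0 := by rintro rfl; exact hc (by rw [pow_zero, pow_zero])
  have hsn : s ^ n ≠ 0 := pow_ne_zero n hs
  have hcs : c ^ n - s ^ n ≠ 0 := sub_ne_zero.mpr hc
  calc ∑ k ∈ Icc 1 n, s * rootFn n k * c / (c - s * rootFn n k)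
      = c * ∑ k ∈ Icc 1 n, rootFn n k / (c / s - rootFn n k) := by
        rw [mul_sum]
        refine sum_congr rfl fun k _ => ?_
        have hk : c - s * rootFn n k ≠ 0 := fun h => hc <| by
          rw [sub_eq_zero.mp h, mul_rootFn_pow hn]
        rw [div_sub' hs, div_div_eq_mul_div]
        field_simp
    _ = n * s ^ n / (c ^ n - s ^ n) * c := by
        rw [sum_rootFn_div_sub (by rwa [div_pow, ne_eq, div_eq_one_iff_eq hsn]), div_pow]
        field_simp

theorem sum_mul_mul_rootFn_div_mul_rootFn_sub {s c : ℂ} (hs : s ≠ 0) (hc : c ^ n ≠ s ^ n) :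
    ∑ k ∈ Icc 1 n, c * (s * rootFn n k) / (s * rootFn n k - c) =
      n * s ^ n / (s ^ n - c ^ n) * c := by
  calc ∑ k ∈ Icc 1 n, c * (s * rootFn n k) / (s * rootFn n k - c)
      = -∑ k ∈ Icc 1 n, s * rootFn n k * c / (c - s * rootFn n k) := by
        rw [← sum_neg_distrib]
        refine sum_congr rfl fun k _ => ?_
        rw [← neg_sub c, div_neg, mul_comm c]
    _ = n * s ^ n / (s ^ n - c ^ n) * c := by
        rw [sum_mul_rootFn_mul_div_sub hs hc, ← neg_sub (s ^ n), div_neg, neg_mul, neg_neg]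

end RootFn

section Resolvent

open spectrum

variable {𝕜 A : Type*} [Field 𝕜] [Ring A] [Algebra 𝕜 A] (T : A)

theorem commute_resolvent (a b : 𝕜) : Commute (resolvent T a) (resolvent T b) :=
  Commute.ringInverse_ringInverse <| (Algebra.commute_algebraMap_left a _).sub_left <|
    (Algebra.commute_algebraMap_right b T).sub_right (Commute.refl T)

variable {T}

theorem resolvent_sub_resolvent_eq_smul_mul {a b : 𝕜} (ha : a ∈ resolventSet 𝕜 T)
    (hb : b ∈ resolventSet 𝕜 T) :
    resolvent T a - resolvent T b = (b - a) • (resolvent T a * resolvent T b) := by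
  have hua := Ring.inverse_mul_cancel _ (mem_resolventSet_iff.mp ha)
  have hub := Ring.mul_inverse_cancel _ (mem_resolventSet_iff.mp hb)
  calc resolvent T a - resolvent T b
      = resolvent T a * ((algebraMap 𝕜 A b - T) - (algebraMap 𝕜 A a - T)) * resolvent T b := by
        rw [mul_sub, sub_mul, mul_assoc, resolvent, resolvent, hub, mul_one, hua, one_mul]
    _ = (b - a) • (resolvent T a * resolvent T b) := by
        rw [sub_sub_sub_cancel_right, ← map_sub, Algebra.algebraMap_eq_smul_one, mul_smul_one,
          smul_mul_assoc]

theorem resolvent_mul_resolvent {a b : 𝕜} (ha : a ∈ resolventSet 𝕜 T) (hb : b ∈ resolventSet 𝕜 T)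
    (hab : a ≠ b) :
    resolvent T a * resolvent T b = (b - a)⁻¹ • (resolvent T a - resolvent T b) := by
  rw [resolvent_sub_resolvent_eq_smul_mul ha hb, inv_smul_smul₀ (sub_ne_zero.mpr hab.symm)]

theorem sum_smul_resolvent_mul_sum_smul_resolvent {ι κ : Type*} {s : Finset ι} {t : Finset κ}
    (α a : ι → 𝕜) (β b : κ → 𝕜) (ha : ∀ i ∈ s, a i ∈ resolventSet 𝕜 T)
    (hb : ∀ j ∈ t, b j ∈ resolventSet 𝕜 T) (hab : ∀ i ∈ s, ∀ j ∈ t, a i ≠ b j) :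
    (∑ i ∈ s, α i • resolvent T (a i)) * (∑ j ∈ t, β j • resolvent T (b j)) =
      ∑ i ∈ s, (∑ j ∈ t, α i * β j / (b j - a i)) • resolvent T (a i) -
        ∑ j ∈ t, (∑ i ∈ s, α i * β j / (b j - a i)) • resolvent T (b j) := by
  simp_rw [sum_mul_sum, smul_mul_smul_comm, sum_smul]
  rw [sum_comm (s := t), ← sum_sub_distrib]
  refine sum_congr rfl fun i hi => ?_
  rw [← sum_sub_distrib]
  refine sum_congr rfl fun j hj => ?_
  rw [resolvent_mul_resolvent (ha i hi) (hb j hj) (hab i hi j hj), smul_smul, smul_sub,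
    div_eq_mul_inv]

theorem commute_sum_smul_resolvent {ι κ : Type*} (s : Finset ι) (t : Finset κ)
    (α a : ι → 𝕜) (β b : κ → 𝕜) :
    Commute (∑ i ∈ s, α i • resolvent T (a i)) (∑ j ∈ t, β j • resolvent T (b j)) :=
  Commute.sum_left _ _ _ fun _ _ => Commute.sum_right _ _ _ fun _ _ =>
    ((commute_resolvent T _ _).smul_left _).smul_right _

end Resolvent

section CircleResolventSum

variable {A : Type*} [Ring A] [Algebra ℂ A] (T : A) (n : ℕ)

/-- The Riemann sum of `(2πi)⁻¹ ∮_{|z| = ρ} (z - T)⁻¹ dz` at the nodes `z = ρ e^{2πik/n}`,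
where `dz = i z dθ`. -/
noncomputable def circleResolventSum (ρ : ℂ) : A :=
  (1 / (n : ℂ)) • ∑ k ∈ Icc 1 n, (ρ * rootFn n k) • resolvent T (ρ * rootFn n k)

theorem commute_circleResolventSum (ρ σ : ℂ) :
    Commute (circleResolventSum T n ρ) (circleResolventSum T n σ) :=
  ((commute_sum_smul_resolvent _ _ _ _ _ _).smul_left _).smul_right _

variable {T n}

theorem circleResolventSum_mul_circleResolventSum {ρ σ : ℂ} (hρ : ρ ≠ 0) (hσ : σ ≠ 0)
    (hρσ : ρ ^ n ≠ σ ^ n) (hρT : ∀ k ∈ Icc 1 n, ρ * rootFn n k ∈ resolventSet ℂ T)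
    (hσT : ∀ k ∈ Icc 1 n, σ * rootFn n k ∈ resolventSet ℂ T) :
    circleResolventSum T n ρ * circleResolventSum T n σ =
      (σ ^ n / (σ ^ n - ρ ^ n)) • circleResolventSum T n ρ -
        (ρ ^ n / (σ ^ n - ρ ^ n)) • circleResolventSum T n σ := by
  have hn : n ≠ 0 := by rintro rfl; exact hρσ (by rw [pow_zero, pow_zero])
  have hne : ∀ k l, ρ * rootFn n k ≠ σ * rootFn n l := fun k l h =>
    hρσ (by rw [← mul_rootFn_pow hn ρ k, h, mul_rootFn_pow hn])
  simp only [circleResolventSum, smul_mul_smul_comm]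
  rw [sum_smul_resolvent_mul_sum_smul_resolvent _ _ _ _ hρT hσT fun k _ l _ => hne k l]
  simp only [sum_mul_mul_rootFn_div_mul_rootFn_sub hσ, sum_mul_rootFn_mul_div_sub hρ,
    mul_rootFn_pow hn, ne_eq, hρσ, Ne.symm hρσ, not_false_eq_true, mul_smul, ← smul_sum]
  have hσρ : σ ^ n - ρ ^ n ≠ 0 := sub_ne_zero.mpr (Ne.symm hρσ)
  match_scalars <;> field_simp

end CircleResolventSum

/-- The product formula `EₙFₙ = FₙEₙ = (1/(1−rⁿ))Eₙ − (rⁿ/(1−rⁿ))Fₙ` for the Riemann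
sums of the Haagerup–Schultz contour-integral idempotents over circles of radii `r < 1`
and `1` centered at `0`. -/
theorem stmt3 {A : Type*} [Ring A] [Algebra ℂ A] (T : A) (n : ℕ) (hn : 1 ≤ n)
    (r : ℝ) (hr0 : 0 < r) (hr1 : r < 1)
    (hinv1 : ∀ k ∈ Finset.Icc 1 n, IsUnit (((r : ℂ) * rootFn n k) • (1 : A) - T))
    (hinv2 : ∀ k ∈ Finset.Icc 1 n, IsUnit ((rootFn n k) • (1 : A) - T)) :
    let E : A := (1 / (n : ℂ)) • ∑ k ∈ Finset.Icc 1 n,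
      ((r : ℂ) * rootFn n k) • Ring.inverse (((r : ℂ) * rootFn n k) • (1 : A) - T)
    let F : A := (1 / (n : ℂ)) • ∑ l ∈ Finset.Icc 1 n,
      (rootFn n l) • Ring.inverse ((rootFn n l) • (1 : A) - T)
    E * F = (1 / (1 - (r : ℂ) ^ n)) • E - ((r : ℂ) ^ n / (1 - (r : ℂ) ^ n)) • F ∧
      F * E = (1 / (1 - (r : ℂ) ^ n)) • E - ((r : ℂ) ^ n / (1 - (r : ℂ) ^ n)) • F := by
  intro E F
  have hres : ∀ z : ℂ, Ring.inverse (z • (1 : A) - T) = resolvent T z := fun z => by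
    rw [resolvent, Algebra.algebraMap_eq_smul_one]
  have hmem : ∀ z : ℂ, IsUnit (z • (1 : A) - T) → z ∈ resolventSet ℂ T := fun z hz => by
    rwa [spectrum.mem_resolventSet_iff, Algebra.algebraMap_eq_smul_one]
  have hE : E = circleResolventSum T n r := by simp only [E, hres, circleResolventSum]
  have hF : F = circleResolventSum T n 1 := by simp only [F, hres, circleResolventSum, one_mul]
  have hrn : (r : ℂ) ^ n ≠ 1 ^ n := by
    rw [one_pow]
    exact_mod_cast (pow_lt_one₀ hr0.le hr1 (by omega)).ne
  have hEF := circleResolventSum_mul_circleResolventSum (by exact_mod_cast hr0.ne') one_ne_zero hrn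
    (fun k hk => hmem _ (hinv1 k hk)) (fun k hk => hmem _ (by simpa using hinv2 k hk))
  rw [one_pow] at hEF
  rw [hE, hF]
  exact ⟨hEF, (commute_circleResolventSum T n _ _).eq.symm.trans hEF⟩
end

section
/- Let x : (0,1] → ℝ be a nonincreasing function with x(t) > 0 for all t, and suppose that s ↦ log(x(s)) is Lebesgue integrable on (0,1). Define S : (0,1] → ℝ by S(t) = x(t)·(1 + (1/t)·∫_0^t log(x(s)/x(t)) ds). Then s ↦ log(S(s)) is integrable on (0,1) and, for every t ∈ (0,1], ∫_0^t log(S(s)) ds ≤ ∫_0^t log(4·x(s/2)) ds. -/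
/-!
Write `f = log ∘ x`, `F t = ∫₀ᵗ f` and `Γ t = excess f t = F t - t f t ≥ 0`, so that
`log S t = f t + log (1 + Γ t / t)`. As `f` is nonincreasing, `F` is concave with supergradient
`f m` at `m`; hence `Γ s ≤ Γ m + s (f m - f s)` and
`log S s ≤ max (f s) (f m) + log (1 + Γ m / s)`.
Integrating over `(0, t]` with `m = t / 2`, and using `∫₀ᵗ log (1 + c / s) ds ≤ c + t`,
gives `∫₀ᵗ log S ≤ t + 2 F (t / 2) ≤ t log 4 + 2 F (t / 2) = ∫₀ᵗ log (4 x (s / 2))`.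
-/

open MeasureTheory Set Real intervalIntegral

lemma mul_log_add_sub_log_le {a b : ℝ} (ha : 0 ≤ a) (hb : 0 ≤ b) :
    a * (log (a + b) - log a) ≤ b := by
  rcases ha.eq_or_lt with rfl | ha
  · simpa using hb
  rw [← log_div (by positivity) ha.ne']
  calc a * log ((a + b) / a) ≤ a * ((a + b) / a - 1) := by
        gcongr; exact log_le_sub_one_of_pos (by positivity)
    _ = b := by field_simp; ring

lemma log_one_add_le_add_max {a b q : ℝ} (ha : 0 ≤ a) (hb : 0 ≤ b) (h : b ≤ a + q) :
    log (1 + b) ≤ log (1 + a) + max q 0 := by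
  have hq : 0 ≤ max q 0 := le_max_right _ _
  calc log (1 + b) ≤ log ((1 + a) * (1 + max q 0)) := by
        gcongr
        nlinarith [le_max_left q 0]
    _ = log (1 + a) + log (1 + max q 0) := log_mul (by positivity) (by positivity)
    _ ≤ log (1 + a) + max q 0 := by
        linarith [log_le_sub_one_of_pos (by positivity : 0 < 1 + max q 0)]

lemma eqOn_log_one_add_div {c t : ℝ} (hc : 0 ≤ c) :
    EqOn (fun s => log (1 + c / s)) (fun s => log (s + c) - log s) (Ioc 0 t) := by
  intro s hs
  have hs0 : 0 < s := hs.1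
  show log (1 + c / s) = log (s + c) - log s
  rw [← log_div (by positivity) hs0.ne']
  congr 1
  field_simp

lemma intervalIntegrable_log_add_sub_log (c t : ℝ) :
    IntervalIntegrable (fun s => log (s + c) - log s) volume 0 t :=
  ((IntervalIntegrable.comp_add_right_iff).2 intervalIntegrable_log').sub intervalIntegrable_log'

lemma integrableOn_log_one_add_div {c t : ℝ} (hc : 0 ≤ c) (ht : 0 ≤ t) :
    IntegrableOn (fun s => log (1 + c / s)) (Ioc 0 t) := by
  rw [integrableOn_congr_fun (eqOn_log_one_add_div hc) measurableSet_Ioc,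
    ← intervalIntegrable_iff_integrableOn_Ioc_of_le ht]
  exact intervalIntegrable_log_add_sub_log c t

lemma integral_log_one_add_div_le {c t : ℝ} (hc : 0 ≤ c) (ht : 0 ≤ t) :
    ∫ s in Ioc 0 t, log (1 + c / s) ≤ c + t := by
  rw [setIntegral_congr_fun measurableSet_Ioc (eqOn_log_one_add_div hc), ← integral_of_le ht,
    integral_sub ((IntervalIntegrable.comp_add_right_iff).2 intervalIntegrable_log')
      intervalIntegrable_log',
    integral_comp_add_right, integral_log, integral_log]
  have h₁ := mul_log_add_sub_log_le ht hc
  have h₂ := mul_log_add_sub_log_le hc ht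
  rw [add_comm c t] at h₂
  simp only [zero_add, zero_mul, sub_zero]
  linarith

theorem AntitoneOn.intervalIntegral_le_sub_mul {f : ℝ → ℝ} {a b m s : ℝ}
    (hf : AntitoneOn f (Ioc a b)) (hfi : IntervalIntegrable f volume m s) (hm : m ∈ Ioc a b)
    (hs : s ∈ Icc a b) : ∫ u in m..s, f u ≤ (s - m) * f m := by
  rcases le_total m s with hms | hsm
  · calc ∫ u in m..s, f u ≤ ∫ _ in m..s, f m :=
          integral_mono_on hms hfi intervalIntegrable_const fun u hu =>
            hf hm ⟨hm.1.trans_le hu.1, hu.2.trans hs.2⟩ hu.1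
      _ = (s - m) * f m := by simp
  · have : ∫ _ in s..m, f m ≤ ∫ u in s..m, f u :=
      integral_mono_on_of_le_Ioo hsm intervalIntegrable_const hfi.symm fun u hu =>
        hf ⟨hs.1.trans_lt hu.1, hu.2.le.trans hm.2⟩ hm hu.2.le
    rw [integral_symm]
    simp only [intervalIntegral.integral_const, smul_eq_mul] at this
    linarith

/-- For `f = log ∘ x` this is `∫₀ᵗ log (x s / x t) ds`. -/
noncomputable def excess (f : ℝ → ℝ) (t : ℝ) : ℝ := ∫ s in Ioc 0 t, (f s - f t)

/-- For `f = log ∘ x`, `logS f t` is `log S(t)`. -/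
noncomputable def logS (f : ℝ → ℝ) (t : ℝ) : ℝ := f t + log (1 + excess f t / t)

section UnitInterval

variable {f : ℝ → ℝ}

lemma intervalIntegrable_of_integrableOn_Ioc (hfi : IntegrableOn f (Ioc 0 1)) {u v : ℝ}
    (hu : u ∈ Icc (0 : ℝ) 1) (hv : v ∈ Icc (0 : ℝ) 1) : IntervalIntegrable f volume u v :=
  ((intervalIntegrable_iff_integrableOn_Ioc_of_le zero_le_one).2 hfi).mono_set <| by
    rw [uIcc_of_le zero_le_one]; exact uIcc_subset_Icc hu hv

lemma excess_eq (hfi : IntegrableOn f (Ioc 0 1)) {t : ℝ} (ht : t ∈ Icc (0 : ℝ) 1) :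
    excess f t = (∫ u in 0..t, f u) - t * f t := by
  rw [excess, integral_sub (hfi.mono_set (Ioc_subset_Ioc_right ht.2))
      (integrableOn_const measure_Ioc_lt_top.ne), setIntegral_const,
    Real.volume_real_Ioc_of_le ht.1, integral_of_le ht.1, smul_eq_mul, sub_zero]

lemma excess_nonneg (hf : AntitoneOn f (Ioc 0 1)) (hfi : IntegrableOn f (Ioc 0 1)) {t : ℝ}
    (ht : t ∈ Ioc (0 : ℝ) 1) : 0 ≤ excess f t := by
  have := hf.intervalIntegral_le_sub_mul (intervalIntegrable_of_integrableOn_Ioc hfi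
    (Ioc_subset_Icc_self ht) (left_mem_Icc.2 zero_le_one)) ht (left_mem_Icc.2 zero_le_one)
  rw [integral_symm] at this
  rw [excess_eq hfi (Ioc_subset_Icc_self ht)]
  linarith

lemma excess_le (hf : AntitoneOn f (Ioc 0 1)) (hfi : IntegrableOn f (Ioc 0 1)) {s m : ℝ}
    (hs : s ∈ Ioc (0 : ℝ) 1) (hm : m ∈ Ioc (0 : ℝ) 1) :
    excess f s ≤ excess f m + s * (f m - f s) := by
  have hI := @intervalIntegrable_of_integrableOn_Ioc f hfi
  have hs' := Ioc_subset_Icc_self hs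
  have hm' := Ioc_subset_Icc_self hm
  have h0 := left_mem_Icc.2 (zero_le_one' ℝ)
  have := hf.intervalIntegral_le_sub_mul (hI hm' hs') hm hs'
  rw [← integral_interval_sub_left (hI h0 hs') (hI h0 hm')] at this
  rw [excess_eq hfi hs', excess_eq hfi hm']
  linarith

lemma le_logS (hf : AntitoneOn f (Ioc 0 1)) (hfi : IntegrableOn f (Ioc 0 1)) {t : ℝ}
    (ht : t ∈ Ioc (0 : ℝ) 1) : f t ≤ logS f t := by
  have := div_nonneg (excess_nonneg hf hfi ht) ht.1.le
  have := log_nonneg (by linarith : (1 : ℝ) ≤ 1 + excess f t / t)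
  rw [logS]
  linarith

lemma logS_le (hf : AntitoneOn f (Ioc 0 1)) (hfi : IntegrableOn f (Ioc 0 1)) {s m : ℝ}
    (hs : s ∈ Ioc (0 : ℝ) 1) (hm : m ∈ Ioc (0 : ℝ) 1) :
    logS f s ≤ max (f s) (f m) + log (1 + excess f m / s) := by
  have h := excess_le hf hfi hs hm
  have key := log_one_add_le_add_max (div_nonneg (excess_nonneg hf hfi hm) hs.1.le)
    (div_nonneg (excess_nonneg hf hfi hs) hs.1.le) (q := f m - f s) <| by
      rw [div_add' _ _ _ hs.1.ne', div_le_div_iff_of_pos_right hs.1]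
      linarith
  have hmax : f s + max (f m - f s) 0 = max (f s) (f m) := by
    rw [← max_add_add_left, add_sub_cancel, add_zero, max_comm]
  rw [logS, ← hmax]
  linarith

lemma aestronglyMeasurable_logS (hfi : IntegrableOn f (Ioc 0 1)) :
    AEStronglyMeasurable (logS f) (volume.restrict (Ioc 0 1)) := by
  have h0 := left_mem_Icc.2 (zero_le_one' ℝ)
  have hF : ContinuousOn (fun t => ∫ u in 0..t, f u) (Icc 0 1) := by
    simpa [uIcc_of_le zero_le_one] using continuousOn_primitive_interval'
      (intervalIntegrable_of_integrableOn_Ioc hfi h0 (right_mem_Icc.2 zero_le_one))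
      left_mem_uIcc
  have hFm : AEMeasurable (fun t => ∫ u in 0..t, f u) (volume.restrict (Ioc 0 1)) :=
    ((hF.mono Ioc_subset_Icc_self).aestronglyMeasurable measurableSet_Ioc).aemeasurable
  have hfm : AEMeasurable f (volume.restrict (Ioc 0 1)) := hfi.aestronglyMeasurable.aemeasurable
  have hg : AEMeasurable (fun t => 1 + ((∫ u in 0..t, f u) - t * f t) / t)
      (volume.restrict (Ioc 0 1)) :=
    aemeasurable_const.add ((hFm.sub (aemeasurable_id.mul hfm)).div aemeasurable_id)
  refine ((hfm.add (measurable_log.comp_aemeasurable hg)).congr <|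
    ae_restrict_of_forall_mem measurableSet_Ioc fun t ht => ?_).aestronglyMeasurable
  simp [logS, excess_eq hfi (Ioc_subset_Icc_self ht)]

lemma integrableOn_logS (hf : AntitoneOn f (Ioc 0 1)) (hfi : IntegrableOn f (Ioc 0 1)) :
    IntegrableOn (logS f) (Ioc 0 1) := by
  have h1 : (1 : ℝ) ∈ Ioc 0 1 := right_mem_Ioc.2 zero_lt_one
  refine Integrable.mono' (g := fun s => ‖f s‖ + log (1 + excess f 1 / s)) (hfi.norm.add
    (integrableOn_log_one_add_div (excess_nonneg hf hfi h1) zero_le_one))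
    (aestronglyMeasurable_logS hfi) (ae_restrict_of_forall_mem measurableSet_Ioc fun s hs => ?_)
  have hmax : max (f s) (f 1) = f s := max_eq_left (hf hs h1 hs.2)
  have hupper := logS_le hf hfi hs h1
  have hlower := le_logS hf hfi hs
  have hlog := log_nonneg (le_add_of_nonneg_right
    (div_nonneg (excess_nonneg hf hfi h1) hs.1.le))
  rw [hmax] at hupper
  rw [norm_eq_abs, norm_eq_abs, abs_le]
  constructor <;> linarith [neg_abs_le (f s), le_abs_self (f s)]

lemma setIntegral_max_apply_eq {m t : ℝ} (hf : AntitoneOn f (Ioc 0 1))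
    (hfi : IntegrableOn f (Ioc 0 1)) (hm : 0 < m) (hmt : m ≤ t) (ht : t ≤ 1) :
    ∫ s in Ioc 0 t, max (f s) (f m) = (∫ u in 0..m, f u) + (t - m) * f m := by
  have hmax : IntegrableOn (fun s => max (f s) (f m)) (Ioc 0 t) :=
    (hfi.mono_set (Ioc_subset_Ioc_right ht)).sup (integrableOn_const measure_Ioc_lt_top.ne)
  rw [← Ioc_union_Ioc_eq_Ioc hm.le hmt, setIntegral_union (Ioc_disjoint_Ioc_of_le le_rfl)
    measurableSet_Ioc (hmax.mono_set (Ioc_subset_Ioc_right hmt))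
    (hmax.mono_set (Ioc_subset_Ioc_left hm.le)), integral_of_le hm.le]
  congr 1
  · refine setIntegral_congr_fun measurableSet_Ioc fun s hs => max_eq_left ?_
    exact hf ⟨hs.1, hs.2.trans (hmt.trans ht)⟩ ⟨hm, hmt.trans ht⟩ hs.2
  · rw [setIntegral_congr_fun measurableSet_Ioc fun s hs => max_eq_right
      (hf ⟨hm, hmt.trans ht⟩ ⟨hm.trans hs.1, hs.2.trans ht⟩ hs.1.le), setIntegral_const,
      Real.volume_real_Ioc_of_le hmt, smul_eq_mul]

lemma integral_logS_le (hf : AntitoneOn f (Ioc 0 1)) (hfi : IntegrableOn f (Ioc 0 1)) {t : ℝ}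
    (ht : t ∈ Ioc (0 : ℝ) 1) :
    ∫ s in Ioc 0 t, logS f s ≤ t + 2 * ∫ u in 0..t / 2, f u := by
  have hm : t / 2 ∈ Ioc (0 : ℝ) 1 := ⟨by linarith [ht.1], by linarith [ht.2]⟩
  have hc := excess_nonneg hf hfi hm
  have hsub : Ioc 0 t ⊆ Ioc (0 : ℝ) 1 := Ioc_subset_Ioc_right ht.2
  have hmax : IntegrableOn (fun s => max (f s) (f (t / 2))) (Ioc 0 t) :=
    (hfi.mono_set hsub).sup (integrableOn_const measure_Ioc_lt_top.ne)
  have hlog := integrableOn_log_one_add_div hc ht.1.le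
  calc ∫ s in Ioc 0 t, logS f s
      ≤ ∫ s in Ioc 0 t, (max (f s) (f (t / 2)) + log (1 + excess f (t / 2) / s)) :=
        setIntegral_mono_on ((integrableOn_logS hf hfi).mono_set hsub) (hmax.add hlog)
          measurableSet_Ioc fun s hs => logS_le hf hfi (hsub hs) hm
    _ ≤ ((∫ u in 0..t / 2, f u) + (t - t / 2) * f (t / 2)) + (excess f (t / 2) + t) := by
        rw [integral_add hmax hlog, setIntegral_max_apply_eq hf hfi hm.1 (by linarith [ht.1]) ht.2]
        gcongr
        exact integral_log_one_add_div_le hc ht.1.le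
    _ = t + 2 * ∫ u in 0..t / 2, f u := by
        rw [excess_eq hfi (Ioc_subset_Icc_self hm)]
        ring

end UnitInterval

lemma log_mul_one_add_integral_log_div_eq_logS {x : ℝ → ℝ}
    (hf : AntitoneOn (fun s => log (x s)) (Ioc 0 1))
    (hpos : ∀ t ∈ Ioc (0 : ℝ) 1, 0 < x t) (hint : IntegrableOn (fun s => log (x s)) (Ioc 0 1))
    {t : ℝ} (ht : t ∈ Ioc (0 : ℝ) 1) :
    log (x t * (1 + (1 / t) * ∫ s in Ioc 0 t, log (x s / x t))) =
      logS (fun s => log (x s)) t := by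
  have hexcess : ∫ s in Ioc 0 t, log (x s / x t) = excess (fun s => log (x s)) t :=
    setIntegral_congr_fun measurableSet_Ioc fun s hs =>
      log_div (hpos s ⟨hs.1, hs.2.trans ht.2⟩).ne' (hpos t ht).ne'
  have := div_nonneg (excess_nonneg hf hint ht) ht.1.le
  rw [hexcess, one_div_mul_eq_div, log_mul (hpos t ht).ne' (by positivity), logS]

lemma integral_log_const_mul_comp_div_two {x : ℝ → ℝ} {c t : ℝ} (hc : 0 < c)
    (hpos : ∀ t ∈ Ioc (0 : ℝ) 1, 0 < x t) (hint : IntegrableOn (fun s => log (x s)) (Ioc 0 1))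
    (ht : t ∈ Ioc (0 : ℝ) 1) :
    ∫ s in Ioc 0 t, log (c * x (s / 2)) = t * log c + 2 * ∫ u in 0..t / 2, log (x u) := by
  have hsub : Ioc 0 (t / 2) ⊆ Ioc (0 : ℝ) 1 := Ioc_subset_Ioc_right (by linarith [ht.1, ht.2])
  rw [← integral_of_le ht.1.le, integral_comp_div (fun u => log (c * x u)) two_ne_zero, zero_div,
    integral_of_le (by linarith [ht.1]), integral_of_le (by linarith [ht.1]),
    setIntegral_congr_fun measurableSet_Ioc fun u hu => log_mul hc.ne' (hpos u (hsub hu)).ne',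
    MeasureTheory.integral_add (integrableOn_const (C := log c) measure_Ioc_lt_top.ne)
      (hint.mono_set hsub),
    setIntegral_const, Real.volume_real_Ioc_of_le (by linarith [ht.1]), smul_eq_mul, smul_eq_mul]
  ring

/-- The commutative form of the logarithmic submajorization `𝐒(T) ≺≺_log 4σ₂μ(T)`:
for a nonincreasing positive function `x` on `(0,1]` with integrable logarithm, the
function `S(t) = x(t)(1 + (1/t)∫₀ᵗ log(x(s)/x(t)) ds)` has integrable logarithm and
is logarithmically submajorized by `s ↦ 4·x(s/2)`. -/
theorem stmt7 (x : ℝ → ℝ) (hmono : AntitoneOn x (Set.Ioc 0 1))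
    (hpos : ∀ t ∈ Set.Ioc (0 : ℝ) 1, 0 < x t)
    (hint : IntegrableOn (fun s => Real.log (x s)) (Set.Ioc 0 1)) :
    let S : ℝ → ℝ := fun t => x t * (1 + (1 / t) * ∫ s in Set.Ioc (0 : ℝ) t, Real.log (x s / x t))
    IntegrableOn (fun s => Real.log (S s)) (Set.Ioc 0 1) ∧
      ∀ t ∈ Set.Ioc (0 : ℝ) 1,
        (∫ s in Set.Ioc (0 : ℝ) t, Real.log (S s)) ≤
          ∫ s in Set.Ioc (0 : ℝ) t, Real.log (4 * x (s / 2)) := by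
  intro S
  have hf : AntitoneOn (fun s => log (x s)) (Ioc 0 1) := fun a ha b hb hab =>
    log_le_log (hpos b hb) (hmono ha hb hab)
  have hS : EqOn (fun s => log (S s)) (logS fun s => log (x s)) (Ioc 0 1) := fun t ht =>
    log_mul_one_add_integral_log_div_eq_logS hf hpos hint ht
  refine ⟨(integrableOn_congr_fun hS measurableSet_Ioc).2 (integrableOn_logS hf hint),
    fun t ht => ?_⟩
  have hlog4 : 1 ≤ log 4 := by
    rw [show (4 : ℝ) = 2 * 2 by norm_num, log_mul two_ne_zero two_ne_zero]
    linarith [log_two_gt_d9]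
  rw [setIntegral_congr_fun measurableSet_Ioc (hS.mono (Ioc_subset_Ioc_right ht.2)),
    integral_log_const_mul_comp_div_two four_pos hpos hint ht]
  nlinarith [integral_logS_le hf hint ht, ht.1]
end

section
/- Let H be a complex Hilbert space, let T be a bounded linear operator on H, and let r > 0. Define E(T,r) to be the set of all ξ ∈ H for which there exists a sequence (ξ_n)_{n≥1} in H with lim_{n→∞} ‖ξ_n − ξ‖ = 0 and limsup_{n→∞} ‖T^n ξ_n‖^{1/n} ≤ r. Then E(T,r) is a closed linear subspace of H, and for every bounded linear operator S on H with ST = TS one has S(E(T,r)) ⊆ E(T,r). -/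
open Filter
open scoped ENNReal NNReal

/-- The Haagerup–Schultz growth subspace `E(T,r)`. -/
def growthSubspace {H : Type*} [NormedAddCommGroup H] [InnerProductSpace ℂ H]
    (T : H →L[ℂ] H) (r : ℝ) : Set H :=
  {ξ : H | ∃ u : ℕ → H,
    Tendsto (fun n => ‖u n - ξ‖) atTop (nhds 0) ∧
    Filter.limsup (fun n => (‖(T ^ n) (u n)‖₊ : ℝ≥0∞) ^ (1 / (n : ℝ))) atTop ≤
      ENNReal.ofReal r}

open Topology

/-! A sequence has exponential growth rate at most `r` (`ExpGrowthLE`) when it is eventually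
below `s ^ n` for every `s > r`; this is the limsup condition of `E(T,r)`, so `ξ ∈ E(T,r)` iff
`ξ` is the limit of some `u` with `‖T^n u_n‖` of growth rate at most `r`. Such sequences are
stable under sums and under applying an operator `S` commuting with `T`, because the constants
`2` and `‖S‖` are swallowed by `s ^ n` after lowering `s` slightly. For closedness, a diagonal
argument shows that `ξ ∈ E(T,r)` as soon as, for all `s > r` and `δ > 0` and all large `n`, some
`x` within `δ` of `ξ` has `‖T^n x‖ ≤ s ^ n`, and this condition visibly passes to limits. -/

theorem exists_seq_forall_eventually_of_antitone {α : Type*} [Nonempty α]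
    {P : ℕ → ℕ → α → Prop} (hP : Antitone P) (h : ∀ k, ∀ᶠ n in atTop, ∃ x, P k n x) :
    ∃ u : ℕ → α, ∀ k, ∀ᶠ n in atTop, P k n (u n) := by
  choose N hN using fun k => eventually_atTop.1 (h k)
  -- the largest index whose threshold has been passed by time `n`
  let κ : ℕ → ℕ := fun n => Nat.findGreatest (fun k => N k ≤ n) n
  refine ⟨fun n => Classical.epsilon (P (κ n) n), fun k => ?_⟩
  filter_upwards [eventually_ge_atTop k, eventually_ge_atTop (N k)] with n hkn hNn
  have hκ : k ≤ κ n := Nat.le_findGreatest hkn hNn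
  have hNκ : N (κ n) ≤ n := Nat.findGreatest_spec (P := fun k => N k ≤ n) hkn hNn
  exact hP hκ n _ (Classical.epsilon_spec (hN _ n hNκ))

theorem ENNReal.coe_rpow_one_div_le_ofReal_iff {a : ℝ≥0} {s : ℝ} (hs : 0 ≤ s) {n : ℕ}
    (hn : n ≠ 0) : (a : ℝ≥0∞) ^ (1 / (n : ℝ)) ≤ ENNReal.ofReal s ↔ (a : ℝ) ≤ s ^ n := by
  rw [one_div, ENNReal.rpow_inv_le_iff (by positivity), ENNReal.rpow_natCast,
    ← ENNReal.ofReal_pow hs, ← ENNReal.ofReal_coe_nnreal,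
    ENNReal.ofReal_le_ofReal_iff (by positivity)]

def ExpGrowthLE (a : ℕ → ℝ) (r : ℝ) : Prop :=
  ∀ s, r < s → ∀ᶠ n in atTop, a n ≤ s ^ n

theorem ENNReal.limsup_rpow_one_div_le_ofReal_iff {a : ℕ → ℝ≥0} {r : ℝ} (hr : 0 ≤ r) :
    limsup (fun n => (a n : ℝ≥0∞) ^ (1 / (n : ℝ))) atTop ≤ ENNReal.ofReal r ↔
      ExpGrowthLE (fun n => a n) r := by
  constructor
  · intro h s hs
    have hlt : limsup (fun n => (a n : ℝ≥0∞) ^ (1 / (n : ℝ))) atTop < ENNReal.ofReal s :=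
      h.trans_lt ((ENNReal.ofReal_lt_ofReal_iff (hr.trans_lt hs)).2 hs)
    filter_upwards [eventually_lt_of_limsup_lt hlt, eventually_ne_atTop 0] with n hn hn0
    exact (coe_rpow_one_div_le_ofReal_iff (hr.trans hs.le) hn0).1 hn.le
  · intro h
    refine le_of_forall_gt_imp_ge_of_dense fun c hc => ?_
    obtain ⟨s, hs0, hrs, hsc⟩ := ENNReal.lt_iff_exists_real_btwn.1 hc
    refine (limsup_le_of_le (by isBoundedDefault) ?_).trans hsc.le
    filter_upwards [h s ((ENNReal.ofReal_lt_ofReal_iff_of_nonneg hr).1 hrs),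
      eventually_ne_atTop 0] with n hn hn0
    exact (coe_rpow_one_div_le_ofReal_iff hs0 hn0).2 hn

theorem eventually_const_mul_pow_le (C : ℝ) {s₁ s : ℝ} (hs₁ : 0 ≤ s₁) (hs : s₁ < s) :
    ∀ᶠ n in atTop, C * s₁ ^ n ≤ s ^ n := by
  have hs0 : 0 < s := hs₁.trans_lt hs
  have hlim : Tendsto (fun n : ℕ => C * (s₁ / s) ^ n) atTop (𝓝 0) := by
    simpa using (tendsto_pow_atTop_nhds_zero_of_lt_one (div_nonneg hs₁ hs0.le)
      ((div_lt_one hs0).2 hs)).const_mul C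
  filter_upwards [hlim.eventually_le_const one_pos] with n hn
  rwa [div_pow, ← mul_div_assoc, div_le_one (pow_pos hs0 n)] at hn

namespace ExpGrowthLE

variable {a b : ℕ → ℝ} {r : ℝ}

theorem mono (ha : ExpGrowthLE a r) (hba : ∀ n, b n ≤ a n) : ExpGrowthLE b r :=
  fun s hs => (ha s hs).mono fun n hn => (hba n).trans hn

theorem const_mul (ha : ExpGrowthLE a r) (hr : 0 ≤ r) {C : ℝ} (hC : 0 ≤ C) :
    ExpGrowthLE (fun n => C * a n) r := by
  intro s hs
  obtain ⟨s₁, hrs₁, hs₁s⟩ := exists_between hs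
  filter_upwards [ha s₁ hrs₁, eventually_const_mul_pow_le C (hr.trans hrs₁.le) hs₁s]
    with n han hn
  exact (mul_le_mul_of_nonneg_left han hC).trans hn

theorem add (ha : ExpGrowthLE a r) (hb : ExpGrowthLE b r) (hr : 0 ≤ r) :
    ExpGrowthLE (a + b) r := by
  intro s hs
  obtain ⟨s₁, hrs₁, hs₁s⟩ := exists_between hs
  filter_upwards [ha s₁ hrs₁, hb s₁ hrs₁, eventually_const_mul_pow_le 2 (hr.trans hrs₁.le) hs₁s]
    with n han hbn hn
  show a n + b n ≤ s ^ n
  linarith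

end ExpGrowthLE

section growthSubspace

variable {H : Type*} [NormedAddCommGroup H] [InnerProductSpace ℂ H] {T : H →L[ℂ] H} {r : ℝ}

theorem mem_growthSubspace_iff (hr : 0 ≤ r) {ξ : H} :
    ξ ∈ growthSubspace T r ↔
      ∃ u : ℕ → H, Tendsto u atTop (𝓝 ξ) ∧ ExpGrowthLE (fun n => ‖(T ^ n) (u n)‖) r := by
  simp only [growthSubspace, Set.mem_ofPred_eq, ← tendsto_iff_norm_sub_tendsto_zero,
    ENNReal.limsup_rpow_one_div_le_ofReal_iff hr, coe_nnnorm]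

theorem mem_growthSubspace_of_forall_eventually (hr : 0 ≤ r) {ξ : H}
    (h : ∀ s, r < s → ∀ δ > 0, ∀ᶠ n in atTop, ∃ x, dist x ξ < δ ∧ ‖(T ^ n) x‖ ≤ s ^ n) :
    ξ ∈ growthSubspace T r := by
  let ε : ℕ → ℝ := fun k => 1 / (k + 1)
  have hε : ∀ k, 0 < ε k := fun k => Nat.one_div_pos_of_nat
  have hP : Antitone fun k n x => dist x ξ < ε k ∧ ‖(T ^ n) x‖ ≤ (r + ε k) ^ n :=
    fun k l hkl n x ⟨hdist, hgrowth⟩ =>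
      have hεkl : ε l ≤ ε k := Nat.one_div_le_one_div hkl
      ⟨hdist.trans_le hεkl,
        hgrowth.trans (pow_le_pow_left₀ (by linarith [hε l]) (by linarith) n)⟩
  obtain ⟨u, hu⟩ := exists_seq_forall_eventually_of_antitone hP fun k =>
    h _ (lt_add_of_pos_right r (hε k)) _ (hε k)
  refine (mem_growthSubspace_iff hr).2 ⟨u, Metric.tendsto_nhds.2 fun δ hδ => ?_, fun s hs => ?_⟩
  · obtain ⟨k, hk⟩ := exists_nat_one_div_lt hδ
    exact (hu k).mono fun n hn => hn.1.trans hk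
  · obtain ⟨k, hk⟩ := exists_nat_one_div_lt (sub_pos.2 hs)
    filter_upwards [hu k] with n hn
    exact hn.2.trans (pow_le_pow_left₀ (by linarith [hε k]) (by linarith) n)

theorem isClosed_growthSubspace (hr : 0 ≤ r) : IsClosed (growthSubspace T r) := by
  refine isClosed_of_closure_subset fun ξ hξ =>
    mem_growthSubspace_of_forall_eventually hr fun s hs δ hδ => ?_
  obtain ⟨η, hη, hξη⟩ := Metric.mem_closure_iff.1 hξ (δ / 2) (half_pos hδ)
  obtain ⟨u, hu, hgrowth⟩ := (mem_growthSubspace_iff hr).1 hη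
  filter_upwards [Metric.tendsto_nhds.1 hu (δ / 2) (half_pos hδ), hgrowth s hs] with n hn hn'
  exact ⟨u n, by linarith [dist_triangle (u n) η ξ, dist_comm ξ η], hn'⟩

theorem zero_mem_growthSubspace (hr : 0 ≤ r) : (0 : H) ∈ growthSubspace T r :=
  (mem_growthSubspace_iff hr).2 ⟨0, tendsto_const_nhds, fun s hs =>
    Eventually.of_forall fun n => by simpa using pow_nonneg (hr.trans hs.le) n⟩

theorem add_mem_growthSubspace (hr : 0 ≤ r) {ξ η : H} (hξ : ξ ∈ growthSubspace T r)
    (hη : η ∈ growthSubspace T r) : ξ + η ∈ growthSubspace T r := by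
  obtain ⟨u, hu, hgu⟩ := (mem_growthSubspace_iff hr).1 hξ
  obtain ⟨v, hv, hgv⟩ := (mem_growthSubspace_iff hr).1 hη
  exact (mem_growthSubspace_iff hr).2
    ⟨u + v, hu.add hv, (hgu.add hgv hr).mono fun n => by simpa using norm_add_le _ _⟩

theorem map_mem_growthSubspace_of_commute (hr : 0 ≤ r) {S : H →L[ℂ] H} (hST : Commute S T)
    {ξ : H} (hξ : ξ ∈ growthSubspace T r) : S ξ ∈ growthSubspace T r := by
  obtain ⟨u, hu, hgu⟩ := (mem_growthSubspace_iff hr).1 hξ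
  refine (mem_growthSubspace_iff hr).2 ⟨fun n => S (u n), (S.continuous.tendsto ξ).comp hu,
    (hgu.const_mul hr (norm_nonneg S)).mono fun n => ?_⟩
  calc ‖(T ^ n) (S (u n))‖ = ‖S ((T ^ n) (u n))‖ := 
        congrArg norm (DFunLike.congr_fun (hST.pow_right n).eq (u n)).symm
    _ ≤ ‖S‖ * ‖(T ^ n) (u n)‖ := S.le_opNorm _

theorem smul_mem_growthSubspace (hr : 0 ≤ r) (c : ℂ) {ξ : H} (hξ : ξ ∈ growthSubspace T r) :
    c • ξ ∈ growthSubspace T r := by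
  simpa using map_mem_growthSubspace_of_commute hr ((Commute.one_left T).smul_left c) hξ

end growthSubspace

theorem stmt8_general {H : Type*} [NormedAddCommGroup H] [InnerProductSpace ℂ H]
    (T : H →L[ℂ] H) (r : ℝ) (hr : 0 < r) :
    IsClosed (growthSubspace T r) ∧
    (0 : H) ∈ growthSubspace T r ∧
    (∀ ξ η : H, ξ ∈ growthSubspace T r → η ∈ growthSubspace T r →
      ξ + η ∈ growthSubspace T r) ∧
    (∀ (c : ℂ) (ξ : H), ξ ∈ growthSubspace T r → c • ξ ∈ growthSubspace T r) ∧
    (∀ S : H →L[ℂ] H, S * T = T * S →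
      ∀ ξ ∈ growthSubspace T r, S ξ ∈ growthSubspace T r) :=
  ⟨isClosed_growthSubspace hr.le, zero_mem_growthSubspace hr.le,
    fun _ _ => add_mem_growthSubspace hr.le, fun c _ => smul_mem_growthSubspace hr.le c,
    fun _ hST _ => map_mem_growthSubspace_of_commute hr.le hST⟩

/-- `E(T,r)` is a closed linear subspace, invariant under every bounded operator
commuting with `T` (i.e. `T`-hyperinvariant). -/
theorem stmt8 {H : Type*} [NormedAddCommGroup H] [InnerProductSpace ℂ H] [CompleteSpace H]
    (T : H →L[ℂ] H) (r : ℝ) (hr : 0 < r) :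
    IsClosed (growthSubspace T r) ∧
    (0 : H) ∈ growthSubspace T r ∧
    (∀ ξ η : H, ξ ∈ growthSubspace T r → η ∈ growthSubspace T r →
      ξ + η ∈ growthSubspace T r) ∧
    (∀ (c : ℂ) (ξ : H), ξ ∈ growthSubspace T r → c • ξ ∈ growthSubspace T r) ∧
    (∀ S : H →L[ℂ] H, S * T = T * S →
      ∀ ξ ∈ growthSubspace T r, S ξ ∈ growthSubspace T r) :=
  stmt8_general T r hr
end

section
/- Let A be a complex unital Banach algebra, let T ∈ A be such that z·1 − T is invertible for every z ∈ ℂ with |z| = 1, let a ∈ ℂ with |a| < 1, let θ ∈ ℝ, and suppose 1 − conj(a)·T is invertible. Set γ(T) = e^{iθ}·(T − a·1)·(1 − conj(a)·T)^{-1}. Then z·1 − γ(T) is invertible for every z with |z| = 1, and ∮_{|z|=1} (z·1 − γ(T))^{-1} dz = ∮_{|w|=1} (w·1 − T)^{-1} dw. -/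
/-!
On the unit circle `γ(e^{is}) = e^{iφ(s)}` for a smooth lift `φ` with `φ(2π) = φ(0) + 2π`, so the
circle integral can be transported along `γ`: `∮ f(z) dz = ∮ γ'(w) f(γ w) dw`. The factorisation
`γ(w) - γ(T) = c(w) (w - T) (1 - āT)⁻¹` with `c(w) = e^{iθ}(1 - |a|²)/(1 - āw) = (1 - āw) γ'(w)`
shows that `z - γ(T)` is invertible on the circle (as `γ` maps the circle onto itself) and that
`γ'(w) (γ(w) - γ(T))⁻¹ = (w - T)⁻¹ + ā/(1 - āw)`. The last term is holomorphic on the closed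
disk, so its integral vanishes by Cauchy's theorem.
-/

open Complex ComplexConjugate Metric Set intervalIntegral
open scoped Real

section Algebra

variable {𝕜 A : Type*} [Field 𝕜] [Ring A] [Algebra 𝕜 A]

theorem Ring.inverse_smul (c : 𝕜) (x : A) : Ring.inverse (c • x) = c⁻¹ • Ring.inverse x := by
  rcases eq_or_ne c 0 with rfl | hc
  · simp
  have hunit : IsUnit (algebraMap 𝕜 A c) := (IsUnit.mk0 c hc).map _
  have hinv : Ring.inverse (algebraMap 𝕜 A c) = algebraMap 𝕜 A c⁻¹ := by
    have h := (Ring.inverse_mul_eq_iff_eq_mul _ 1 _ hunit).mpr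
      (by rw [← map_mul, mul_inv_cancel₀ hc, map_one])
    rwa [mul_one] at h
  rw [Algebra.smul_def, Ring.inverse_mul (Or.inl hunit), hinv, Algebra.smul_def, Algebra.commutes]

theorem one_sub_smul_mul_inverse {b w : 𝕜} {T : A} (hT : IsUnit (w • (1 : A) - T)) :
    ((1 : A) - b • T) * Ring.inverse (w • (1 : A) - T) =
      (1 - b * w) • Ring.inverse (w • (1 : A) - T) + b • (1 : A) := by
  have hsplit : (1 : A) - b • T = (1 - b * w) • (1 : A) + b • (w • (1 : A) - T) := by module
  rw [hsplit, add_mul, smul_mul_assoc, smul_mul_assoc, one_mul, Ring.mul_inverse_cancel _ hT]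

variable (E a b : 𝕜) {w : 𝕜} (T : A)

theorem smul_one_sub_mobius_eq (hw : 1 - b * w ≠ 0) (hS : IsUnit ((1 : A) - b • T)) :
    (E * (w - a) / (1 - b * w)) • (1 : A) - E • ((T - a • (1 : A)) * Ring.inverse (1 - b • T)) =
      (E * (1 - b * a) / (1 - b * w)) • ((w • (1 : A) - T) * Ring.inverse (1 - b • T)) := by
  have hnum : (E * (w - a) / (1 - b * w)) • ((1 : A) - b • T) - E • (T - a • (1 : A)) =
      (E * (1 - b * a) / (1 - b * w)) • (w • (1 : A) - T) := by
    have hk : (1 - b * w) * (1 - b * w)⁻¹ = 1 := mul_inv_cancel₀ hw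
    match_scalars
    · linear_combination (-E * a) * hk
    · linear_combination E * hk
  calc _ = ((E * (w - a) / (1 - b * w)) • ((1 : A) - b • T) - E • (T - a • (1 : A))) *
        Ring.inverse (1 - b • T) := by
        symm; rw [sub_mul, smul_mul_assoc, smul_mul_assoc, Ring.mul_inverse_cancel _ hS]
    _ = _ := by rw [hnum, smul_mul_assoc]

theorem isUnit_smul_one_sub_mobius (hw : 1 - b * w ≠ 0) (hba : E * (1 - b * a) ≠ 0)
    (hS : IsUnit ((1 : A) - b • T)) (hT : IsUnit (w • (1 : A) - T)) :
    IsUnit ((E * (w - a) / (1 - b * w)) • (1 : A) -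
      E • ((T - a • (1 : A)) * Ring.inverse (1 - b • T))) := by
  rw [smul_one_sub_mobius_eq E a b T hw hS]
  exact (hT.mul hS.ringInverse).smul (Units.mk0 _ (div_ne_zero hba hw))

theorem inverse_smul_one_sub_mobius (hw : 1 - b * w ≠ 0) (hS : IsUnit ((1 : A) - b • T))
    (hT : IsUnit (w • (1 : A) - T)) :
    Ring.inverse ((E * (w - a) / (1 - b * w)) • (1 : A) -
        E • ((T - a • (1 : A)) * Ring.inverse (1 - b • T))) =
      ((1 - b * w) / (E * (1 - b * a))) • (((1 : A) - b • T) * Ring.inverse (w • (1 : A) - T)) := by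
  rw [smul_one_sub_mobius_eq E a b T hw hS, Ring.inverse_smul, Ring.inverse_mul (Or.inl hT),
    Ring.inverse_inverse hS, inv_div]

end Algebra

theorem one_sub_mul_ne_zero_of_norm_lt_one {R : Type*} [NormedRing R] [NormOneClass R] {b z : R}
    (hb : ‖b‖ < 1) (hz : ‖z‖ ≤ 1) : 1 - b * z ≠ 0 := by
  intro h
  have hbz : ‖b * z‖ < 1 := (norm_mul_le b z).trans_lt <| by nlinarith [norm_nonneg b]
  rw [← eq_of_sub_eq_zero h, norm_one] at hbz
  exact hbz.false

theorem circleIntegral.integral_deriv_smul_comp_of_lift {F : Type*} [NormedAddCommGroup F]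
    [NormedSpace ℂ F] {f : ℂ → F} {g : ℂ → ℂ} {φ : ℝ → ℝ} {c c' : ℂ} {R R' : ℝ}
    (hφ : ContDiff ℝ 1 φ) (hφ_period : φ (2 * π) = φ 0 + 2 * π)
    (hlift : ∀ s, g (circleMap c R s) = circleMap c' R' (φ s))
    (hg : ∀ s, DifferentiableAt ℂ g (circleMap c R s)) (hf : ContinuousOn f (sphere c' |R'|)) :
    (∮ w in C(c, R), deriv g w • f (g w)) = ∮ z in C(c', R'), f z := by
  set h : ℝ → F := fun t => deriv (circleMap c' R') t • f (circleMap c' R' t)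
  have hh_cont : Continuous h := by
    simp only [h, deriv_circleMap]
    exact ((continuous_circleMap 0 R').mul continuous_const).smul
      (hf.comp_continuous (continuous_circleMap c' R') (circleMap_mem_sphere' c' R'))
  have hh_period : Function.Periodic h (2 * π) := fun t => by
    simp only [h, deriv_circleMap, periodic_circleMap _ _ t]
  have hφ_deriv : ∀ s, HasDerivAt φ (deriv φ s) s :=
    fun s => (hφ.differentiable one_ne_zero s).hasDerivAt
  have hchain : ∀ s, deriv φ s • deriv (circleMap c' R') (φ s) =
      deriv g (circleMap c R s) * deriv (circleMap c R) s := by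
    intro s
    have hcomp : g ∘ circleMap c R = circleMap c' R' ∘ φ := funext hlift
    simp only [deriv_circleMap]
    refine ((hasDerivAt_circleMap c' R' (φ s)).scomp s (hφ_deriv s)).unique ?_
    rw [← hcomp]
    exact (hg s).hasDerivAt.comp s (hasDerivAt_circleMap c R s)
  calc (∮ w in C(c, R), deriv g w • f (g w)) = ∫ s in 0..2 * π, deriv φ s • (h ∘ φ) s := by
        refine intervalIntegral.integral_congr fun s _ => ?_
        simp only [h, Function.comp, ← smul_assoc, hchain, ← hlift, smul_eq_mul, mul_comm]
    _ = ∫ t in φ 0..φ (2 * π), h t := integral_deriv_smul_comp' (fun s _ => hφ_deriv s)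
        (hφ.continuous_deriv le_rfl).continuousOn hh_cont.continuousOn
    _ = ∮ z in C(c', R'), f z := by
        rw [hφ_period, hh_period.intervalIntegral_add_eq (φ 0) 0, zero_add]
        rfl

theorem continuousOn_inverse_smul_one_sub {A : Type*} [NormedRing A] [NormedAlgebra ℂ A]
    [CompleteSpace A] (T : A) {s : Set ℂ} (hs : ∀ z ∈ s, IsUnit (z • (1 : A) - T)) :
    ContinuousOn (fun z : ℂ => Ring.inverse (z • (1 : A) - T)) s := fun z hz =>
  (NormedRing.inverse_continuousAt (hs z hz).unit).comp_continuousWithinAt_of_eq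
    ((continuous_id.smul continuous_const).sub continuous_const).continuousWithinAt
    (hs z hz).unit_spec.symm

theorem circleIntegral_div_one_sub_mul_smul_eq_zero {F : Type*} [NormedAddCommGroup F]
    [NormedSpace ℂ F] {b : ℂ} (hb : ‖b‖ < 1) (x : F) :
    (∮ z in C(0, 1), (b / (1 - b * z)) • x) = 0 := by
  have hden : ∀ z ∈ closedBall (0 : ℂ) 1, 1 - b * z ≠ 0 := fun z hz =>
    one_sub_mul_ne_zero_of_norm_lt_one hb (mem_closedBall_zero_iff.mp hz)
  refine DiffContOnCl.circleIntegral_eq_zero zero_le_one ?_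
  refine DifferentiableOn.diffContOnCl ?_
  rw [closure_ball 0 one_ne_zero]
  exact ((differentiableOn_const b).div ((differentiableOn_const 1).sub
    ((differentiableOn_const b).mul differentiableOn_id)) hden).smul_const x

section Mobius

noncomputable def mobius (a : ℂ) (θ : ℝ) (w : ℂ) : ℂ :=
  exp (θ * I) * (w - a) / (1 - conj a * w)

variable {a : ℂ} (θ : ℝ)

theorem norm_mobius (ha : ‖a‖ < 1) {w : ℂ} (hw : ‖w‖ = 1) : ‖mobius a θ w‖ = 1 := by
  have hden := one_sub_mul_ne_zero_of_norm_lt_one (b := conj a) (by rwa [norm_conj]) hw.le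
  have hnum : ‖w - a‖ = ‖1 - conj a * w‖ := calc
    ‖w - a‖ = ‖conj w * (w - a)‖ := by rw [norm_mul, norm_conj, hw, one_mul]
    _ = ‖conj (1 - conj a * w)‖ := by
        congr 1
        simp only [map_sub, map_one, map_mul, conj_conj]
        linear_combination (by rw [conj_mul', hw]; norm_num : conj w * w = 1)
    _ = ‖1 - conj a * w‖ := norm_conj _
  rw [mobius, norm_div, norm_mul, norm_exp_ofReal_mul_I, one_mul, hnum,
    div_self (norm_ne_zero_iff.mpr hden)]

theorem mobius_mobius_neg (ha : ‖a‖ < 1) {z : ℂ} (hz : ‖z‖ ≤ 1) :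
    mobius a θ (mobius (-(a * exp (θ * I))) (-θ) z) = z := by
  set E := exp (θ * I) with hE
  have hE0 : E ≠ 0 := exp_ne_zero _
  have hconjE : conj E = E⁻¹ := by rw [hE, ← exp_conj, ← exp_neg]; congr 1; simp
  have hden : E + z * conj a ≠ 0 := by
    have := one_sub_mul_ne_zero_of_norm_lt_one (b := -(conj a * E⁻¹)) (by
      rwa [norm_neg, norm_mul, norm_conj, norm_inv, hE, norm_exp_ofReal_mul_I, inv_one, mul_one]) hz
    rw [show E + z * conj a = E * (1 - -(conj a * E⁻¹) * z) by field_simp; ring]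
    exact mul_ne_zero hE0 this
  have haa : 1 - conj a * a ≠ 0 := one_sub_mul_ne_zero_of_norm_lt_one (by rwa [norm_conj]) ha.le
  simp only [mobius, ofReal_neg, neg_mul, exp_neg, ← hE, map_neg, map_mul, hconjE]
  field_simp
  simp only [sub_neg_eq_add]
  have hnum : (z + E * a) / (E + z * conj a) - a = z * (1 - conj a * a) / (E + z * conj a) := by
    field_simp; ring
  have hdiv : 1 - (z + E * a) * conj a / (E + z * conj a) =
      E * (1 - conj a * a) / (E + z * conj a) := by
    field_simp; ring
  rw [hnum, hdiv]
  field_simp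

theorem hasDerivAt_mobius {w : ℂ} (hw : 1 - conj a * w ≠ 0) :
    HasDerivAt (mobius a θ) (exp (θ * I) * (1 - conj a * a) / (1 - conj a * w) ^ 2) w := by
  have h := (((hasDerivAt_id' w).sub_const a).const_mul (exp (θ * I))).div
    (HasDerivAt.const_sub 1 ((hasDerivAt_id' w).const_mul (conj a))) hw
  refine h.congr_deriv ?_
  field_simp
  ring

-- `arg (e^{iθ} e^{is} (1 - a e^{-is}) / (1 - ā e^{is})) = θ + s - 2 arg (1 - ā e^{is})`
noncomputable def mobiusLift (a : ℂ) (θ : ℝ) (s : ℝ) : ℝ :=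
  θ + s - 2 * (log (1 - conj a * circleMap 0 1 s)).im

theorem one_sub_conj_mul_circleMap_mem_slitPlane (ha : ‖a‖ < 1) (s : ℝ) :
    1 - conj a * circleMap 0 1 s ∈ slitPlane := by
  left
  have hre : (conj a * circleMap 0 1 s).re ≤ ‖a‖ := calc
    _ ≤ ‖conj a * circleMap 0 1 s‖ := re_le_norm _
    _ = ‖a‖ := by rw [norm_mul, norm_conj, norm_circleMap_zero, abs_one, mul_one]
  rw [sub_re, one_re]
  linarith

theorem mobius_circleMap (ha : ‖a‖ < 1) (s : ℝ) :
    mobius a θ (circleMap 0 1 s) = circleMap 0 1 (mobiusLift a θ s) := by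
  set u := 1 - conj a * circleMap 0 1 s with hu
  have hu0 : u ≠ 0 := slitPlane_ne_zero (one_sub_conj_mul_circleMap_mem_slitPlane ha s)
  have hrot : exp (conj (log u) - log u) = conj u / u := by
    rw [exp_sub, exp_conj, exp_log hu0]
  have hconj_u : circleMap 0 1 s * conj u = circleMap 0 1 s - a := by
    simp only [hu, map_sub, map_one, map_mul, conj_conj]
    have hs : conj (circleMap 0 1 s) * circleMap 0 1 s = 1 := by simp [conj_mul']
    linear_combination (-a) * hs
  have hangle : (mobiusLift a θ s : ℂ) * I = θ * I + s * I + (conj (log u) - log u) := by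
    have hsc := sub_conj (log u)
    push_cast at hsc
    simp only [mobiusLift, ← hu]
    push_cast
    linear_combination hsc
  have hcm : ∀ t : ℝ, circleMap 0 1 t = exp (t * I) := fun t => by simp [circleMap_zero]
  rw [mobius, ← hu, ← hconj_u, hcm (mobiusLift a θ s), hangle, exp_add, exp_add, hrot, ← hcm s]
  field_simp

theorem contDiff_mobiusLift (ha : ‖a‖ < 1) : ContDiff ℝ 1 (mobiusLift a θ) := by
  have hu : ContDiff ℝ 1 fun s => 1 - conj a * circleMap 0 1 s :=
    contDiff_const.sub (contDiff_const.mul (contDiff_circleMap 0 1))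
  have hlog : ContDiff ℝ 1 fun s => log (1 - conj a * circleMap 0 1 s) :=
    contDiff_iff_contDiffAt.mpr fun s =>
      ((contDiffAt_log (one_sub_conj_mul_circleMap_mem_slitPlane ha s)).restrict_scalars ℝ).comp
        (g := log) s hu.contDiffAt
  exact (contDiff_const.add contDiff_id).sub (contDiff_const.mul (imCLM.contDiff.comp hlog))

theorem mobiusLift_two_pi : mobiusLift a θ (2 * π) = mobiusLift a θ 0 + 2 * π := by
  have hper : circleMap 0 1 (2 * π) = circleMap 0 1 0 := by
    simpa using periodic_circleMap 0 1 0
  simp only [mobiusLift, hper]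
  ring

theorem mobius_surjOn_sphere (ha : ‖a‖ < 1) : SurjOn (mobius a θ) (sphere 0 1) (sphere 0 1) := by
  intro z hz
  rw [mem_sphere_zero_iff_norm] at hz
  refine ⟨mobius (-(a * exp (θ * I))) (-θ) z, ?_, mobius_mobius_neg θ ha hz.le⟩
  rw [mem_sphere_zero_iff_norm]
  exact norm_mobius _ (by rwa [norm_neg, norm_mul, norm_exp_ofReal_mul_I, mul_one]) hz

section MobiusElem

variable {A : Type*} [Ring A] [Algebra ℂ A] {a : ℂ} (θ : ℝ) {T : A}

noncomputable def mobiusElem (a : ℂ) (θ : ℝ) (T : A) : A :=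
  exp (θ * I) • ((T - a • (1 : A)) * Ring.inverse (1 - conj a • T))

theorem isUnit_smul_one_sub_mobiusElem (ha : ‖a‖ < 1) (hS : IsUnit ((1 : A) - conj a • T))
    (hT : ∀ w : ℂ, ‖w‖ = 1 → IsUnit (w • (1 : A) - T)) {z : ℂ} (hz : ‖z‖ = 1) :
    IsUnit (z • (1 : A) - mobiusElem a θ T) := by
  obtain ⟨w, hw, rfl⟩ := mobius_surjOn_sphere θ ha (mem_sphere_zero_iff_norm.mpr hz)
  rw [mem_sphere_zero_iff_norm] at hw
  have hconj : ‖conj a‖ < 1 := by rwa [norm_conj]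
  exact isUnit_smul_one_sub_mobius _ a _ T (one_sub_mul_ne_zero_of_norm_lt_one hconj hw.le)
    (mul_ne_zero (exp_ne_zero _) (one_sub_mul_ne_zero_of_norm_lt_one hconj ha.le)) hS (hT w hw)

theorem deriv_mobius_smul_inverse_smul_one_sub_mobiusElem (ha : ‖a‖ < 1)
    (hS : IsUnit ((1 : A) - conj a • T)) {w : ℂ} (hw : ‖w‖ = 1) (hT : IsUnit (w • (1 : A) - T)) :
    deriv (mobius a θ) w • Ring.inverse (mobius a θ w • (1 : A) - mobiusElem a θ T) =
      Ring.inverse (w • (1 : A) - T) + (conj a / (1 - conj a * w)) • (1 : A) := by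
  have hconj : ‖conj a‖ < 1 := by rwa [norm_conj]
  have hdw : 1 - conj a * w ≠ 0 := one_sub_mul_ne_zero_of_norm_lt_one hconj hw.le
  have haa : 1 - conj a * a ≠ 0 := one_sub_mul_ne_zero_of_norm_lt_one hconj ha.le
  rw [mobius, mobiusElem, inverse_smul_one_sub_mobius _ a _ T hdw hS hT,
    (hasDerivAt_mobius θ hdw).deriv, smul_smul, one_sub_smul_mul_inverse hT, smul_add, smul_smul,
    smul_smul]
  match_scalars <;> field_simp

end MobiusElem

/-- Invariance of the Haagerup–Schultz contour-integral idempotent under the Möbius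
transformation `γ(z) = e^{iθ}(z − a)/(1 − ā z)` of the unit disk:
`∮_{|z|=1} (z − γ(T))⁻¹ dz = ∮_{|w|=1} (w − T)⁻¹ dw`. -/
theorem stmt13 {A : Type*} [NormedRing A] [NormedAlgebra ℂ A] [CompleteSpace A]
    (T : A) (hT : ∀ z : ℂ, ‖z‖ = 1 → IsUnit (z • (1 : A) - T))
    (a : ℂ) (ha : ‖a‖ < 1) (θ : ℝ)
    (hU : IsUnit ((1 : A) - (starRingEnd ℂ) a • T)) :
    let γT : A := Complex.exp (θ * Complex.I) •
      ((T - a • (1 : A)) * Ring.inverse ((1 : A) - (starRingEnd ℂ) a • T))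
    (∀ z : ℂ, ‖z‖ = 1 → IsUnit (z • (1 : A) - γT)) ∧
    (∮ z in C(0, 1), Ring.inverse (z • (1 : A) - γT)) =
      ∮ w in C(0, 1), Ring.inverse (w • (1 : A) - T) := by
  intro γT
  have hunit : ∀ z : ℂ, ‖z‖ = 1 → IsUnit (z • (1 : A) - mobiusElem a θ T) :=
    fun z hz => isUnit_smul_one_sub_mobiusElem θ ha hU hT hz
  refine ⟨hunit, ?_⟩
  change (∮ z in C(0, 1), Ring.inverse (z • (1 : A) - mobiusElem a θ T)) = _
  have hconj : ‖conj a‖ < 1 := by rwa [norm_conj]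
  have hden : ∀ w ∈ sphere (0 : ℂ) 1, 1 - conj a * w ≠ 0 := fun w hw =>
    one_sub_mul_ne_zero_of_norm_lt_one hconj (mem_sphere_zero_iff_norm.mp hw).le
  have hint : CircleIntegrable (fun z => (conj a / (1 - conj a * z)) • (1 : A)) 0 1 :=
    ((continuousOn_const.div (continuousOn_const.sub (continuousOn_const.mul continuousOn_id))
      hden).smul continuousOn_const).circleIntegrable zero_le_one
  rw [← circleIntegral.integral_deriv_smul_comp_of_lift (contDiff_mobiusLift θ ha)
      (mobiusLift_two_pi θ) (mobius_circleMap θ ha)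
      (fun s => (hasDerivAt_mobius θ (hden _ (by simp))).differentiableAt)
      (continuousOn_inverse_smul_one_sub _ fun z hz => hunit z (by simpa using hz)),
    circleIntegral.integral_congr zero_le_one fun w hw =>
      deriv_mobius_smul_inverse_smul_one_sub_mobiusElem θ ha hU (by simpa using hw)
        (hT w (by simpa using hw)),
    circleIntegral.integral_add ((continuousOn_inverse_smul_one_sub T fun z hz =>
      hT z (by simpa using hz)).circleIntegrable zero_le_one) hint,
    circleIntegral_div_one_sub_mul_smul_eq_zero hconj, add_zero]
end Mobius
end
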